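/- For any two pre-Hilbert spaces X₀ and X₁, the orthogonal direct sum X₀ ⊕ X₁ has an orthonormal basis if and only if both X₀ and X₁ have orthonormal bases. Equivalently, X₀ ⊕ X₁ is pathological (has no orthonormal basis) iff at least one of X₀, X₁ is pathological. -/

import Mathlib

/-!
If `T : H → E` is a continuous linear surjection admitting an adjoint and `B` is an orthonormal
basis of `H`, Bessel's inequality shows that each `T b` is non-orthogonal to only countably many
`T b'`. The connected components of the graph `⟪T b, T b'⟫ ≠ 0` on `B` are therefore countable and
span mutually orthogonal subspaces, so Gram–Schmidt on each component yields an orthonormal system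
whose span is `T (span B)`, which is dense. The two coordinate projections of `E × F` are such
maps; conversely, the union of orthonormal bases of `E` and `F` is one of the sum.
-/

noncomputable section
open scoped InnerProductSpace ENNReal

/-- An orthonormal subset of an inner product space. -/
def OrthSet (k : Type*) {E : Type*} [RCLike k] [NormedAddCommGroup E]
    [InnerProductSpace k E] (B : Set E) : Prop :=
  Orthonormal k ((↑) : B → E)

/-- A maximal orthonormal system of the whole space. -/
def MaximalOrthSet (k : Type*) {E : Type*} [RCLike k] [NormedAddCommGroup E]
    [InnerProductSpace k E] (B : Set E) : Prop :=
  OrthSet k B ∧ ∀ C : Set E, B ⊆ C → OrthSet k C → C = B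

/-- An orthonormal basis (as a set): an orthonormal system whose linear span is dense. -/
def IsOrthBasisSet (k : Type*) {E : Type*} [RCLike k] [NormedAddCommGroup E]
    [InnerProductSpace k E] (B : Set E) : Prop :=
  OrthSet k B ∧ Dense (Submodule.span k B : Set E)

/-- The space has an orthonormal basis (is non-pathological). -/
def HasOrthBasis (k E : Type*) [RCLike k] [NormedAddCommGroup E]
    [InnerProductSpace k E] : Prop :=
  ∃ B : Set E, IsOrthBasisSet k B

/-- Density: least cardinality of a dense subset. -/
def densityCard (E : Type*) [TopologicalSpace E] : Cardinal :=
  sInf { c | ∃ D : Set E, Dense D ∧ Cardinal.mk D = c }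

open Set Submodule

theorem Relation.countable_setOf_reflTransGen {α : Type*} {r : α → α → Prop}
    (h : ∀ x, {y | r x y}.Countable) (x : α) :
    {y | Relation.ReflTransGen r x y}.Countable := by
  let reach : ℕ → Set α := fun n => Nat.rec {x} (fun _ s => ⋃ z ∈ s, {y | r z y}) n
  have h_reach : ∀ n, (reach n).Countable := by
    intro n
    induction n with
    | zero => exact countable_singleton x
    | succ n ih => exact ih.biUnion fun z _ => h z
  refine (countable_iUnion h_reach).mono fun y hy => ?_
  induction hy with
  | refl => exact mem_iUnion.2 ⟨0, rfl⟩
  | tail _ hr ih =>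
    obtain ⟨n, hn⟩ := mem_iUnion.1 ih
    exact mem_iUnion.2 ⟨n + 1, mem_biUnion hn hr⟩

section InnerProductSpace

variable {k : Type*} [RCLike k] {E F H : Type*} [NormedAddCommGroup E] [InnerProductSpace k E]
  [NormedAddCommGroup F] [InnerProductSpace k F] [NormedAddCommGroup H] [InnerProductSpace k H]

theorem exists_orthSet_span_eq_of_countable {s : Set E} (hs : s.Countable) :
    ∃ C : Set E, OrthSet k C ∧ span k C = span k s := by
  obtain ⟨f, hf⟩ := (hs.insert 0).exists_eq_range (insert_nonempty 0 s)
  set g := InnerProductSpace.gramSchmidtNormed k f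
  have h_range : range (fun i : {i | g i ≠ 0} => g i) = range g \ {0} := by
    ext x
    simp only [mem_range, Subtype.exists, mem_ofPred_eq, mem_sdiff, mem_singleton_iff]
    constructor
    · rintro ⟨i, hi, rfl⟩
      exact ⟨⟨i, rfl⟩, hi⟩
    · rintro ⟨⟨i, rfl⟩, hi⟩
      exact ⟨i, hi, rfl⟩
  refine ⟨range g \ {0}, ?_, ?_⟩
  · have hg := InnerProductSpace.gramSchmidtNormed_orthonormal' (𝕜 := k) f
    rw [OrthSet, ← h_range, orthonormal_subtype_range hg.linearIndependent.injective]
    exact hg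
  · rw [span_sdiff_singleton_zero, InnerProductSpace.span_gramSchmidtNormed_range,
      InnerProductSpace.span_gramSchmidt, ← hf, span_insert_zero]

theorem OrthSet.iUnion {ι : Type*} {C : ι → Set E} (hC : ∀ i, OrthSet k (C i))
    (h_orth : Pairwise fun i j => ∀ x ∈ C i, ∀ y ∈ C j, ⟪x, y⟫_k = 0) :
    OrthSet k (⋃ i, C i) := by
  classical
  rw [OrthSet, orthonormal_subtype_iff_ite]
  intro x hx y hy
  obtain ⟨i, hxi⟩ := mem_iUnion.1 hx
  obtain ⟨j, hyj⟩ := mem_iUnion.1 hy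
  by_cases hij : i = j
  · subst hij
    exact orthonormal_subtype_iff_ite.1 (hC i) x hxi y hyj
  · have hxy := h_orth hij x hxi y hyj
    rw [hxy, if_neg]
    rintro rfl
    exact (hC i).ne_zero ⟨x, hxi⟩ (inner_self_eq_zero.1 hxy)

theorem exists_orthSet_span_eq_span_range {ι : Type*} (u : ι → E)
    (hu : ∀ i, {j | ⟪u i, u j⟫_k ≠ 0}.Countable) :
    ∃ C : Set E, OrthSet k C ∧ span k C = span k (range u) := by
  let G := SimpleGraph.fromRel fun i j => ⟪u i, u j⟫_k ≠ 0
  have h_adj : ∀ {i j}, G.Adj i j → ⟪u i, u j⟫_k ≠ 0 := by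
    rintro i j ⟨-, h | h⟩
    exacts [h, fun h' => h (inner_eq_zero_symm.1 h')]
  have h_orth : ∀ {i j}, G.connectedComponentMk i ≠ G.connectedComponentMk j →
      ⟪u i, u j⟫_k = 0 := by
    intro i j hij
    by_contra h
    refine hij (SimpleGraph.ConnectedComponent.eq.2 (SimpleGraph.Adj.reachable ?_))
    exact ⟨fun hij' => hij (congrArg _ hij'), Or.inl h⟩
  have h_countable : ∀ c : G.ConnectedComponent, c.supp.Countable := by
    intro c
    induction c using SimpleGraph.ConnectedComponent.ind with | h i => ?_
    have h_supp : (G.connectedComponentMk i).supp = {j | Relation.ReflTransGen G.Adj i j} := by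
      ext j
      rw [SimpleGraph.ConnectedComponent.mem_supp_iff, SimpleGraph.ConnectedComponent.eq,
        SimpleGraph.reachable_comm, SimpleGraph.reachable_iff_reflTransGen]
      rfl
    rw [h_supp]
    exact Relation.countable_setOf_reflTransGen (fun i => (hu i).mono fun j => h_adj) i
  choose C hC using fun c : G.ConnectedComponent =>
    exists_orthSet_span_eq_of_countable (k := k) ((h_countable c).image u)
  refine ⟨⋃ c, C c, OrthSet.iUnion (fun c => (hC c).1) ?_, ?_⟩
  · intro c c' hcc' x hx y hy
    have h_span_orth : span k (u '' c.supp) ⟂ span k (u '' c'.supp) := by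
      rw [isOrtho_span]
      rintro _ ⟨i, hi, rfl⟩ _ ⟨j, hj, rfl⟩
      exact h_orth (by rwa [(c.mem_supp_iff i).1 hi, (c'.mem_supp_iff j).1 hj])
    exact h_span_orth.inner_eq ((hC c).2 ▸ subset_span hx) ((hC c').2 ▸ subset_span hy)
  · rw [span_iUnion]
    simp_rw [(hC _).2, ← span_iUnion, ← image_iUnion, G.iUnion_connectedComponentSupp, image_univ]

theorem HasOrthBasis.of_surjective_of_adjoint (T : H →L[k] E) (hT : Function.Surjective T)
    (S : E → H) (hS : ∀ x e, ⟪T x, e⟫_k = ⟪x, S e⟫_k) (h : HasOrthBasis k H) :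
    HasOrthBasis k E := by
  obtain ⟨B, hB, h_dense⟩ := h
  obtain ⟨C, hC, h_span⟩ := exists_orthSet_span_eq_span_range (k := k) (fun b : B => T b) <| by
    -- `⟪T b, T b'⟫` is the conjugate of the Fourier coefficient `⟪b', S (T b)⟫`
    intro b
    refine (hB.inner_products_summable (x := S (T b))).countable_support.mono fun b' hb' => ?_
    rw [Function.mem_support, ← hS]
    exact pow_ne_zero 2 (norm_ne_zero_iff.2 fun h => hb' (inner_eq_zero_symm.1 h))
  refine ⟨C, hC, ?_⟩
  rw [h_span, ← image_eq_range, ← T.coe_coe, span_image, map_coe]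
  exact hT.denseRange.dense_image T.continuous h_dense

theorem HasOrthBasis.prod (hE : HasOrthBasis k E) (hF : HasOrthBasis k F) :
    HasOrthBasis k (WithLp 2 (E × F)) := by
  obtain ⟨B₀, hB₀, h_dense₀⟩ := hE
  obtain ⟨B₁, hB₁, h_dense₁⟩ := hF
  let L₀ := (WithLp.linearEquiv 2 k (E × F)).symm.toLinearMap ∘ₗ LinearMap.inl k E F
  let L₁ := (WithLp.linearEquiv 2 k (E × F)).symm.toLinearMap ∘ₗ LinearMap.inr k E F
  let v : B₀ ⊕ B₁ → WithLp 2 (E × F) := Sum.elim (fun a => L₀ a) (fun b => L₁ b)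
  have hv : Orthonormal k v := by
    constructor
    · rintro (a | b)
      exacts [(WithLp.norm_toLp_fst 2 E F a).trans (hB₀.1 a),
        (WithLp.norm_toLp_snd 2 E F b).trans (hB₁.1 b)]
    · rintro (a | b) (a' | b') h
      · simpa [v, L₀, L₁] using hB₀.2 (ne_of_apply_ne Sum.inl h)
      · simp [v, L₀, L₁]
      · simp [v, L₀, L₁]
      · simpa [v, L₀, L₁] using hB₁.2 (ne_of_apply_ne Sum.inr h)
  have h_range : range v = L₀ '' B₀ ∪ L₁ '' B₁ := by
    rw [Set.Sum.elim_range, ← image_eq_range, ← image_eq_range]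
  refine ⟨range v, (orthonormal_subtype_range hv.linearIndependent.injective).2 hv, ?_⟩
  let e := (WithLp.prodContinuousLinearEquiv 2 k E F).symm
  refine (e.surjective.denseRange.dense_image e.continuous (h_dense₀.prod h_dense₁)).mono ?_
  rintro _ ⟨⟨a, b⟩, ⟨ha, hb⟩, rfl⟩
  have h_sum : e (a, b) = L₀ a + L₁ b := by
    simp [e, L₀, L₁, ← WithLp.toLp_add]
  have h₀ : L₀ a ∈ span k (range v) := by
    refine span_mono (h_range ▸ subset_union_left) ?_
    rw [span_image]
    exact mem_map_of_mem ha
  have h₁ : L₁ b ∈ span k (range v) := by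
    refine span_mono (h_range ▸ subset_union_right) ?_
    rw [span_image]
    exact mem_map_of_mem hb
  rw [SetLike.mem_coe, h_sum]
  exact add_mem h₀ h₁

end InnerProductSpace

theorem stmt11 {k : Type*} [RCLike k] {E F : Type*}
    [NormedAddCommGroup E] [InnerProductSpace k E]
    [NormedAddCommGroup F] [InnerProductSpace k F] :
    HasOrthBasis k (WithLp 2 (E × F)) ↔ (HasOrthBasis k E ∧ HasOrthBasis k F) := by
  refine ⟨fun h => ⟨?_, ?_⟩, fun ⟨hE, hF⟩ => hE.prod hF⟩
  · refine h.of_surjective_of_adjoint (WithLp.fstL 2 k E F) (fun a => ⟨WithLp.toLp 2 (a, 0), rfl⟩)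
      (fun a => WithLp.toLp 2 (a, 0)) fun x a => ?_
    simp
  · refine h.of_surjective_of_adjoint (WithLp.sndL 2 k E F) (fun b => ⟨WithLp.toLp 2 (0, b), rfl⟩)
      (fun b => WithLp.toLp 2 (0, b)) fun x b => ?_
    simp
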